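/- Let k* = (k_i*)_{i=1}^n be a graphical degree sequence in the ultra-dense regime (so that the dual sequence ℓ* = (n−1−k_i*)_{i=1}^n is also graphical), and assume canonical parameters exist for k*. Let P_mic, P_can be the microcanonical and canonical ensembles with constraint k*, and P̂_mic, P̂_can those with constraint ℓ*. Then S_n(P_mic | P_can) = S_n(P̂_mic | P̂_can); that is, the relative entropy between the microcanonical and canonical ensembles is invariant under the duality map k_i* ↦ n−1−k_i*. -/

import Mathlib

open Filter Finset Asymptotics

/-- A simple undirected graph on `n` labelled vertices, given by its adjacency
indicators `g i j ∈ {0,1}` (as `Bool`), symmetric and with no loops. -/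
abbrev LabelledGraph (n : ℕ) : Type :=
  {g : Fin n → Fin n → Bool // (∀ i j, g i j = g j i) ∧ ∀ i, g i i = false}

noncomputable section

/-- The degree `k_i(G) = Σ_{j ≠ i} g_ij(G)` of vertex `i` in the graph `G`. -/
def degSeq {n : ℕ} (G : LabelledGraph n) (i : Fin n) : ℕ :=
  ∑ j ∈ Finset.univ.filter (fun j => j ≠ i), if G.1 i j then 1 else 0

/-- Canonical connection probabilities `p*_ij = x_i x_j / (1 + x_i x_j)`. -/
def pStar {n : ℕ} (x : Fin n → ℝ) (i j : Fin n) : ℝ := x i * x j / (1 + x i * x j)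

/-- The parameters `x` realise the degree sequence `k` as canonical averages:
`Σ_{j ≠ i} p*_ij = k_i` for all `i`. -/
def fitsDegrees {n : ℕ} (x : Fin n → ℝ) (k : Fin n → ℕ) : Prop :=
  ∀ i, ∑ j ∈ Finset.univ.filter (fun j => j ≠ i), pStar x i j = (k i : ℝ)

/-- Canonical ensemble probability
`P_can(G) = Π_{i<j} p_ij^{g_ij(G)} (1-p_ij)^{1-g_ij(G)}`. -/
def Pcan {n : ℕ} (p : Fin n → Fin n → ℝ) (G : LabelledGraph n) : ℝ :=
  ∏ ij ∈ Finset.univ.filter (fun ij : Fin n × Fin n => ij.1 < ij.2),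
    if G.1 ij.1 ij.2 then p ij.1 ij.2 else 1 - p ij.1 ij.2

/-- `Ω_k`: the number of graphs with degree sequence `k`. -/
def numGraphs (n : ℕ) (k : Fin n → ℕ) : ℕ :=
  (Finset.univ.filter (fun G : LabelledGraph n => degSeq G = k)).card

/-- Microcanonical ensemble: uniform on the graphs with degree sequence `k`. -/
def Pmic {n : ℕ} (k : Fin n → ℕ) (G : LabelledGraph n) : ℝ :=
  if degSeq G = k then ((numGraphs n k : ℝ))⁻¹ else 0

/-- Relative entropy `S_n(P_mic | P_can) = Σ_G P_mic(G) log (P_mic(G)/P_can(G))`. -/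
def relEnt (n : ℕ) (k : Fin n → ℕ) (p : Fin n → Fin n → ℝ) : ℝ :=
  ∑ G : LabelledGraph n, Pmic k G * Real.log (Pmic k G / Pcan p G)

/-- `f̄_n = (1/(2n)) Σ_{i=1}^n log (k_i (n-1-k_i) / n)`. -/
def fbar (n : ℕ) (k : Fin n → ℕ) : ℝ :=
  (1 / (2 * (n : ℝ))) * ∑ i, Real.log ((k i : ℝ) * ((n : ℝ) - 1 - (k i : ℝ)) / (n : ℝ))

/-- The canonical covariance matrix `Q` of the degrees:
`q_ij = p_ij (1 - p_ij)` for `i ≠ j` and `q_ii = Σ_{l ≠ i} p_il (1 - p_il)`. -/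
def Qmat {n : ℕ} (p : Fin n → Fin n → ℝ) : Matrix (Fin n) (Fin n) ℝ :=
  Matrix.of fun i j =>
    if i = j then ∑ l ∈ Finset.univ.filter (fun l => l ≠ i), p i l * (1 - p i l)
    else p i j * (1 - p i j)

/-- δ-tameness: `δ ≤ p_ij ≤ 1 - δ` for all `i ≠ j`. -/
def deltaTame {n : ℕ} (δ : ℝ) (p : Fin n → Fin n → ℝ) : Prop :=
  ∀ i j : Fin n, i ≠ j → δ ≤ p i j ∧ p i j ≤ 1 - δ


/-!
Complementation `G ↦ G_c` is a bijection between graphs with degree sequence `k` and graphs with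
degree sequence `n - 1 - k`, so it carries `P_mic` onto `P̂_mic`. Since `p_ij ↦ 1 - p_ij` corresponds
to `x ↦ x⁻¹`, the parameters `y⁻¹` fit `k`; the fitted edge weights `x_i x_j` are unique (the map
`t ↦ t / (1 + t)` and `log` are both strictly increasing, so a monotonicity argument applies),
hence `p̂_ij = 1 - p_ij` and complementation also carries `P_can` onto `P̂_can`. Relative entropy is
invariant under a bijection carrying both ensembles to their duals.
-/

namespace LabelledGraph

def compl {n : ℕ} (G : LabelledGraph n) : LabelledGraph n :=
  ⟨fun i j => if i = j then false else !(G.1 i j), by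
    refine ⟨fun i j => ?_, fun i => if_pos rfl⟩
    rcases eq_or_ne i j with rfl | h
    · rfl
    · simp [h, h.symm, G.2.1 i j]⟩

lemma compl_apply_of_ne {n : ℕ} (G : LabelledGraph n) {i j : Fin n} (h : i ≠ j) :
    (compl G).1 i j = !(G.1 i j) :=
  if_neg h

lemma compl_involutive {n : ℕ} : Function.Involutive (compl (n := n)) := by
  intro G
  refine Subtype.ext (funext fun i => funext fun j => ?_)
  rcases eq_or_ne i j with rfl | h
  · simp [compl, G.2.2 i]
  · simp [compl, h]

end LabelledGraph

open LabelledGraph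

lemma card_filter_ne {ι : Type*} [Fintype ι] [DecidableEq ι] (i : ι) :
    #{j | j ≠ i} = Fintype.card ι - 1 := by
  rw [filter_ne', card_erase_of_mem (mem_univ i), card_univ]

lemma sum_filter_ne_comm {ι M : Type*} [Fintype ι] [DecidableEq ι] [AddCommMonoid M]
    (f : ι → ι → M) :
    ∑ i, ∑ j ∈ {j | j ≠ i}, f i j = ∑ i, ∑ j ∈ {j | j ≠ i}, f j i := by
  simp_rw [sum_filter]
  rw [sum_comm]
  refine sum_congr rfl fun j _ => sum_congr rfl fun i _ => ?_
  simp only [ne_comm]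

lemma sum_filter_ne_mul_add_eq_zero {ι : Type*} [Fintype ι] [DecidableEq ι]
    (d : ι → ι → ℝ) (hsymm : ∀ i j, d i j = d j i) (hrow : ∀ i, ∑ j ∈ {j | j ≠ i}, d i j = 0)
    (a : ι → ℝ) : ∑ i, ∑ j ∈ {j | j ≠ i}, d i j * (a i + a j) = 0 := by
  have hleft : ∑ i, ∑ j ∈ {j | j ≠ i}, d i j * a i = 0 :=
    sum_eq_zero fun i _ => by rw [← sum_mul, hrow i, zero_mul]
  have hright : ∑ i, ∑ j ∈ {j | j ≠ i}, d i j * a j = 0 := by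
    rw [sum_filter_ne_comm (fun i j => d i j * a j)]
    simpa only [hsymm] using hleft
  simp_rw [mul_add, sum_add_distrib]
  rw [hleft, hright, add_zero]

lemma mul_sub_sub_pos_of_strictMonoOn {s : Set ℝ} {f g : ℝ → ℝ}
    (hf : StrictMonoOn f s) (hg : StrictMonoOn g s) {u v : ℝ} (hu : u ∈ s) (hv : v ∈ s)
    (huv : u ≠ v) : 0 < (f u - f v) * (g u - g v) := by
  rcases huv.lt_or_gt with h | h
  · exact mul_pos_of_neg_of_neg (sub_neg.2 (hf hu hv h)) (sub_neg.2 (hg hu hv h))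
  · exact mul_pos (sub_pos.2 (hf hv hu h)) (sub_pos.2 (hg hv hu h))

lemma strictMonoOn_div_one_add : StrictMonoOn (fun t : ℝ => t / (1 + t)) (Set.Ioi 0) := by
  intro u hu v _ huv
  have hu : (0 : ℝ) < u := hu
  rw [div_lt_div_iff₀ (by linarith) (by linarith)]
  nlinarith

lemma pStar_comm {n : ℕ} (x : Fin n → ℝ) (i j : Fin n) : pStar x i j = pStar x j i := by
  simp only [pStar, mul_comm]

lemma pStar_inv {n : ℕ} (y : Fin n → ℝ) {i j : Fin n} (hy : 0 < y i * y j) :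
    pStar (fun i => (y i)⁻¹) i j = 1 - pStar y i j := by
  simp only [pStar, ← mul_inv]
  generalize y i * y j = t at hy ⊢
  field_simp
  ring

lemma mul_eq_mul_of_fitsDegrees {n : ℕ} {x z : Fin n → ℝ} {k : Fin n → ℕ}
    (hx : ∀ i, 0 < x i) (hz : ∀ i, 0 < z i) (hfx : fitsDegrees x k) (hfz : fitsDegrees z k)
    {i j : Fin n} (hij : i ≠ j) : x i * x j = z i * z j := by
  -- Every term of `∑_{i ≠ j} F i j` is nonnegative, while the sum vanishes because `log (x_i x_j)`
  -- splits as `log x_i + log x_j` and the rows of `p^x - p^z` sum to `k_i - k_i = 0`.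
  set F : Fin n → Fin n → ℝ := fun i j =>
    (pStar x i j - pStar z i j) * (Real.log (x i * x j) - Real.log (z i * z j))
  have hF_nonneg : ∀ i j, 0 ≤ F i j := by
    intro i j
    rcases eq_or_ne (x i * x j) (z i * z j) with h | h
    · simp [F, pStar, h]
    · exact (mul_sub_sub_pos_of_strictMonoOn strictMonoOn_div_one_add Real.strictMonoOn_log
        (mul_pos (hx i) (hx j)) (mul_pos (hz i) (hz j)) h).le
  have hF_sum : ∑ i, ∑ j ∈ {j | j ≠ i}, F i j = 0 := by
    have hlog : ∀ i j, F i j = (pStar x i j - pStar z i j) *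
        ((Real.log (x i) - Real.log (z i)) + (Real.log (x j) - Real.log (z j))) := by
      intro i j
      simp only [F, Real.log_mul (hx i).ne' (hx j).ne', Real.log_mul (hz i).ne' (hz j).ne']
      ring
    simp_rw [hlog]
    refine sum_filter_ne_mul_add_eq_zero _ (fun i j => by rw [pStar_comm x, pStar_comm z])
      (fun i => ?_) (fun i => Real.log (x i) - Real.log (z i))
    rw [sum_sub_distrib, hfx i, hfz i, sub_self]
  have hF_zero : F i j = 0 :=
    (sum_eq_zero_iff_of_nonneg fun j _ => hF_nonneg i j).1
      ((sum_eq_zero_iff_of_nonneg fun i _ => sum_nonneg fun j _ => hF_nonneg i j).1 hF_sum i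
        (mem_univ i)) j (by simpa using hij.symm)
  by_contra h
  exact (mul_sub_sub_pos_of_strictMonoOn strictMonoOn_div_one_add Real.strictMonoOn_log
    (mul_pos (hx i) (hx j)) (mul_pos (hz i) (hz j)) h).ne' hF_zero

lemma fitsDegrees_inv {n : ℕ} {y : Fin n → ℝ} {k : Fin n → ℕ} (hk : ∀ i, k i ≤ n - 1)
    (hy : ∀ i, 0 < y i) (hfit : fitsDegrees y fun i => n - 1 - k i) :
    fitsDegrees (fun i => (y i)⁻¹) k := by
  intro i
  have hn : 1 ≤ n := i.pos
  rw [sum_congr rfl fun j _ => pStar_inv y (mul_pos (hy i) (hy j)), sum_sub_distrib, hfit i,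
    sum_const, card_filter_ne, Fintype.card_fin, nsmul_one, Nat.cast_sub (hk i),
    Nat.cast_sub hn, Nat.cast_one]
  ring

lemma degSeq_add_degSeq_compl {n : ℕ} (G : LabelledGraph n) (i : Fin n) :
    degSeq G i + degSeq (compl G) i = n - 1 := by
  have hcard : n - 1 = #{j | j ≠ i} := by rw [card_filter_ne, Fintype.card_fin]
  rw [degSeq, degSeq, ← sum_add_distrib, hcard, card_eq_sum_ones]
  refine sum_congr rfl fun j hj => ?_
  rw [compl_apply_of_ne G (by simpa [eq_comm] using hj)]
  cases G.1 i j <;> rfl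

lemma degSeq_le {n : ℕ} (G : LabelledGraph n) (i : Fin n) : degSeq G i ≤ n - 1 := by
  have := degSeq_add_degSeq_compl G i
  omega

lemma degSeq_compl_eq_iff {n : ℕ} {k : Fin n → ℕ} (hk : ∀ i, k i ≤ n - 1)
    (G : LabelledGraph n) : degSeq (compl G) = (fun i => n - 1 - k i) ↔ degSeq G = k := by
  simp only [funext_iff]
  refine forall_congr' fun i => ?_
  have := degSeq_add_degSeq_compl G i
  have := hk i
  omega

lemma numGraphs_dual {n : ℕ} {k : Fin n → ℕ} (hk : ∀ i, k i ≤ n - 1) :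
    numGraphs n (fun i => n - 1 - k i) = numGraphs n k := by
  refine card_nbij' compl compl (fun G hG => ?_) (fun G hG => ?_)
    (fun G _ => compl_involutive G) (fun G _ => compl_involutive G)
  · simp only [coe_filter, mem_univ, true_and] at hG ⊢
    exact (degSeq_compl_eq_iff hk _).1 (by rwa [compl_involutive])
  · simp only [coe_filter, mem_univ, true_and] at hG ⊢
    exact (degSeq_compl_eq_iff hk G).2 hG

lemma Pmic_compl {n : ℕ} {k : Fin n → ℕ} (hk : ∀ i, k i ≤ n - 1) (G : LabelledGraph n) :
    Pmic (fun i => n - 1 - k i) (compl G) = Pmic k G := by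
  simp only [Pmic, degSeq_compl_eq_iff hk, numGraphs_dual hk]

lemma Pcan_compl {n : ℕ} {p q : Fin n → Fin n → ℝ} (hpq : ∀ i j, i < j → q i j = 1 - p i j)
    (G : LabelledGraph n) : Pcan q (compl G) = Pcan p G := by
  refine prod_congr rfl fun ij hij => ?_
  have hlt : ij.1 < ij.2 := (mem_filter.1 hij).2
  rw [compl_apply_of_ne G hlt.ne, hpq _ _ hlt]
  cases G.1 ij.1 ij.2 <;> simp

lemma relEnt_dual {n : ℕ} {k : Fin n → ℕ} (hk : ∀ i, k i ≤ n - 1) {p q : Fin n → Fin n → ℝ}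
    (hpq : ∀ i j, i < j → q i j = 1 - p i j) :
    relEnt n (fun i => n - 1 - k i) q = relEnt n k p := by
  rw [relEnt, ← Equiv.sum_comp (compl_involutive.toPerm _)]
  exact sum_congr rfl fun G _ => by
    simp only [Function.Involutive.coe_toPerm, Pmic_compl hk, Pcan_compl hpq]

theorem relEnt_duality_invariance_general
    (n : ℕ) (k : Fin n → ℕ)
    (hgraphical : ∃ G : LabelledGraph n, degSeq G = k)
    (x : Fin n → ℝ) (hxpos : ∀ i, 0 < x i) (hfit : fitsDegrees x k)
    (y : Fin n → ℝ) (hypos : ∀ i, 0 < y i)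
    (hfity : fitsDegrees y (fun i => n - 1 - k i)) :
    relEnt n k (pStar x) = relEnt n (fun i => n - 1 - k i) (pStar y) := by
  obtain ⟨G, rfl⟩ := hgraphical
  have hk : ∀ i, degSeq G i ≤ n - 1 := degSeq_le G
  have hxy : ∀ i j, i < j → pStar y i j = 1 - pStar x i j := fun i j hij => by
    have hprod := mul_eq_mul_of_fitsDegrees hxpos (fun i => inv_pos.2 (hypos i)) hfit
      (fitsDegrees_inv hk hypos hfity) hij.ne
    have hx : pStar x i j = pStar (fun i => (y i)⁻¹) i j := by simp only [pStar, hprod]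
    rw [hx, pStar_inv y (mul_pos (hypos i) (hypos j)), sub_sub_cancel]
  exact (relEnt_dual hk hxy).symm

/-- the relative entropy between the microcanonical and canonical
ensembles is invariant under the duality map `k_i* ↦ n - 1 - k_i*`. -/
theorem relEnt_duality_invariance
    (n : ℕ) (k : Fin n → ℕ)
    (hgraphical : ∃ G : LabelledGraph n, degSeq G = k)
    (x : Fin n → ℝ) (hxpos : ∀ i, 0 < x i) (hfit : fitsDegrees x k)
    (hgraphicaldual : ∃ G : LabelledGraph n, degSeq G = fun i => n - 1 - k i)
    (y : Fin n → ℝ) (hypos : ∀ i, 0 < y i)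
    (hfity : fitsDegrees y (fun i => n - 1 - k i)) :
    relEnt n k (pStar x) = relEnt n (fun i => n - 1 - k i) (pStar y) :=
  relEnt_duality_invariance_general n k hgraphical x hxpos hfit y hypos hfity
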